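/- Let n be a nonzero integer, k_1, k_2 \in Z, and let f_1, f_2 be Schwartz functions on R. For j = 1,2 set (i_{n,k_j} f_j)(x,y,z) = \sum_{\ell \in Z, \ell \equiv k_j (mod n)} e(nz + \ell y) f_j(x + \ell/n), a series converging absolutely for each (x,y,z). Then \int_0^1 \int_0^1 \int_0^1 (i_{n,k_1} f_1)(x,y,z) \cdot conj((i_{n,k_2} f_2)(x,y,z)) dx\,dy\,dz equals \int_R f_1(t) conj(f_2(t)) dt if k_1 \equiv k_2 (mod n), and equals 0 if k_1 \not\equiv k_2 (mod n). -/

import Mathlib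

/-!
The factor `e(nz)` is common to all terms of both series and has modulus one, so it drops out
of the product. What remains is, for fixed `x`, a product of two absolutely convergent Fourier
series in `y` with coefficients `f_j(x + ℓ/n)` supported on the classes `k_j + nℤ`; by
orthogonality of the characters `e(ℓy)` its integral over `y` is the sum of the products of
coefficients at common frequencies. This is empty when `k₁ ≢ k₂`, and otherwise equals
`∑_m g(x + k₁/n + m)` with `g = f₁ · conj f₂`, whose integral over a period unfolds to `∫_ℝ g`.
The rapid decay of Schwartz functions justifies every exchange of sum and integral.
-/

/-- `e(x) = exp(2πix)` -/
noncomputable def e (x : ℝ) : ℂ := Complex.exp (2 * Real.pi * Complex.I * (x : ℂ))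

open MeasureTheory Filter ComplexConjugate
open scoped SchwartzMap

lemma e_add (s t : ℝ) : e (s + t) = e s * e t := by
  rw [e, e, e, ← Complex.exp_add]
  push_cast
  ring_nf

lemma norm_e (t : ℝ) : ‖e t‖ = 1 := by
  rw [e, show 2 * (Real.pi : ℂ) * Complex.I * t = ((2 * Real.pi * t : ℝ) : ℂ) * Complex.I by
    push_cast; ring]
  exact Complex.norm_exp_ofReal_mul_I _

lemma conj_e (t : ℝ) : conj (e t) = e (-t) := by
  rw [e, e, ← Complex.exp_conj]
  congr 1
  simp only [map_mul, Complex.conj_I, Complex.conj_ofReal, map_ofNat, Complex.ofReal_neg]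
  ring

lemma e_mul_conj_e (t : ℝ) : e t * conj (e t) = 1 := by
  rw [conj_e, ← e_add, add_neg_cancel, e, Complex.ofReal_zero, mul_zero, Complex.exp_zero]

@[fun_prop]
lemma continuous_e : Continuous e := by
  unfold e
  fun_prop

lemma intervalIntegral_e_int_mul (m : ℤ) :
    ∫ y in (0 : ℝ)..1, e (m * y) = if m = 0 then 1 else 0 := by
  split_ifs with hm
  · simp [hm, e]
  have hc : 2 * (Real.pi : ℂ) * Complex.I * m ≠ 0 := by
    simp [Real.pi_ne_zero, Complex.I_ne_zero, hm]
  have he : ∀ y : ℝ, e (m * y) = Complex.exp (2 * Real.pi * Complex.I * m * y) := fun y => by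
    rw [e]; push_cast; ring_nf
  simp_rw [he, integral_exp_mul_complex hc, Complex.ofReal_one, mul_one, Complex.ofReal_zero,
    mul_zero, Complex.exp_zero]
  rw [show 2 * (Real.pi : ℂ) * Complex.I * m = m * (2 * Real.pi * Complex.I) by ring,
    Complex.exp_int_mul_two_pi_mul_I, sub_self, zero_div]

lemma intervalIntegral_tsum_e_mul {ι : Type*} [Countable ι] (u : ι → ℤ) {c : ι → ℂ}
    (hc : Summable fun i => ‖c i‖) :
    ∫ y in (0 : ℝ)..1, ∑' i, e (u i * y) * c i = ∑' i, if u i = 0 then c i else 0 := by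
  rw [intervalIntegral.integral_of_le zero_le_one, ← integral_tsum_of_summable_integral_norm]
  · refine tsum_congr fun i => ?_
    rw [integral_mul_const, ← intervalIntegral.integral_of_le zero_le_one,
      intervalIntegral_e_int_mul]
    split_ifs <;> simp
  · intro i
    exact (by fun_prop : Continuous fun y : ℝ => e (u i * y) * c i).integrableOn_Ioc
  · refine hc.congr fun i => ?_
    simp [norm_e]

theorem intervalIntegral_tsum_e_mul_mul_conj {a b : ℤ → ℂ} (ha : Summable fun ℓ => ‖a ℓ‖)
    (hb : Summable fun ℓ => ‖b ℓ‖) :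
    ∫ y in (0 : ℝ)..1, (∑' ℓ : ℤ, e (ℓ * y) * a ℓ) * conj (∑' ℓ : ℤ, e (ℓ * y) * b ℓ) =
      ∑' ℓ, a ℓ * conj (b ℓ) := by
  have hexpand : ∀ y : ℝ,
      (∑' ℓ : ℤ, e (ℓ * y) * a ℓ) * conj (∑' ℓ : ℤ, e (ℓ * y) * b ℓ) =
        ∑' p : ℤ × ℤ, e (((p.1 - p.2 : ℤ) : ℝ) * y) * (a p.1 * conj (b p.2)) := by
    intro y
    rw [Complex.conj_tsum, tsum_mul_tsum_of_summable_norm (by simpa [norm_e] using ha)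
      (by simpa [norm_e] using hb)]
    refine tsum_congr fun p => ?_
    rw [map_mul, conj_e, Int.cast_sub, sub_mul, sub_eq_add_neg, e_add]
    ring
  have hsupp : Function.support (fun p : ℤ × ℤ => if p.1 - p.2 = 0 then a p.1 * conj (b p.2) else 0)
      ⊆ Set.range fun ℓ => (ℓ, ℓ) := by
    rintro ⟨ℓ, m⟩ hp
    have hℓm : ℓ = m := sub_eq_zero.mp (not_not.mp fun h => hp (if_neg h))
    exact ⟨ℓ, by rw [hℓm]⟩
  have hdiag : Function.Injective fun ℓ : ℤ => (ℓ, ℓ) := fun ℓ m h => congrArg Prod.fst h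
  simp_rw [hexpand]
  rw [intervalIntegral_tsum_e_mul (fun p : ℤ × ℤ => p.1 - p.2)
    (by simpa using ha.mul_norm (f := a) (g := fun ℓ => conj (b ℓ)) (by simpa using hb)),
    ← hdiag.tsum_eq hsupp]
  simp

lemma SchwartzMap.summable_norm_add_int {E : Type*} [NormedAddCommGroup E] [NormedSpace ℝ E]
    (f : 𝓢(ℝ, E)) (c : ℝ) : Summable fun m : ℤ => ‖f (c + m)‖ := by
  have hshift : Tendsto (fun m : ℤ => c + m) cofinite (cocompact ℝ) :=
    (Homeomorph.addLeft c).isClosedEmbedding.tendsto_cocompact.comp Int.tendsto_coe_cofinite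
  have hdecay := (f.isBigO_cocompact_rpow (-2)).norm_left.comp_tendsto hshift
  refine summable_of_isBigO ?_ hdecay
  refine ((Real.summable_one_div_int_add_rpow c 2).mpr one_lt_two).congr fun m => ?_
  simp [Real.rpow_neg (abs_nonneg _), add_comm]

def Int.equivModEq {n : ℤ} (hn : n ≠ 0) (k : ℤ) : ℤ ≃ {ℓ : ℤ // ℓ ≡ k [ZMOD n]} where
  toFun m := ⟨k + n * m, Int.modEq_iff_dvd.mpr ⟨-m, by ring⟩⟩
  invFun ℓ := (ℓ - k) / n
  left_inv m := by simp [Int.mul_ediv_cancel_left _ hn]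
  right_inv ℓ := Subtype.ext <| by
    simp only [Int.mul_ediv_cancel' (Int.ModEq.dvd ℓ.2.symm), add_sub_cancel]

lemma add_equivModEq_div {n : ℤ} (hn : n ≠ 0) (k : ℤ) (x : ℝ) (m : ℤ) :
    x + ((Int.equivModEq hn k m : ℤ) : ℝ) / n = x + k / n + m := by
  have hn' : (n : ℝ) ≠ 0 := Int.cast_ne_zero.mpr hn
  simp only [Int.equivModEq, Equiv.coe_fn_mk, Int.cast_add, Int.cast_mul]
  field_simp
  ring

lemma summable_modEq_comp_add_div_iff {E : Type*} [AddCommMonoid E] [TopologicalSpace E] {n : ℤ}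
    (hn : n ≠ 0) (k : ℤ) (g : ℝ → E) (x : ℝ) :
    Summable (fun ℓ : {ℓ : ℤ // ℓ ≡ k [ZMOD n]} => g (x + (ℓ : ℤ) / n)) ↔
      Summable fun m : ℤ => g (x + k / n + m) := by
  simp only [← (Int.equivModEq hn k).summable_iff, Function.comp_def, add_equivModEq_div]

lemma tsum_modEq_comp_add_div {E : Type*} [AddCommMonoid E] [TopologicalSpace E] {n : ℤ}
    (hn : n ≠ 0) (k : ℤ) (g : ℝ → E) (x : ℝ) :
    ∑' ℓ : {ℓ : ℤ // ℓ ≡ k [ZMOD n]}, g (x + (ℓ : ℤ) / n) = ∑' m : ℤ, g (x + k / n + m) := by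
  simp only [← (Int.equivModEq hn k).tsum_eq, add_equivModEq_div]

lemma SchwartzMap.summable_norm_modEq {E : Type*} [NormedAddCommGroup E] [NormedSpace ℝ E]
    (f : 𝓢(ℝ, E)) {n : ℤ} (hn : n ≠ 0) (k : ℤ) (x : ℝ) :
    Summable fun ℓ : {ℓ : ℤ // ℓ ≡ k [ZMOD n]} => ‖f (x + (ℓ : ℤ) / n)‖ :=
  (summable_modEq_comp_add_div_iff hn k (fun t => ‖f t‖) x).mpr (f.summable_norm_add_int _)

lemma intervalIntegral_tsum_comp_add_int {E : Type*} [NormedAddCommGroup E] [NormedSpace ℝ E]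
    [CompleteSpace E] {g : ℝ → E} (hg : Integrable g) (c : ℝ) :
    ∫ x in (0 : ℝ)..1, ∑' m : ℤ, g (x + c + m) = ∫ t, g t := by
  have hgc : Integrable fun t => g (t + c) := hg.comp_add_right c
  have hint : ∀ m : ℤ, Integrable (fun x => g (x + m + c)) (volume.restrict (Set.Ioc 0 1)) :=
    fun m => (hgc.comp_add_right (m : ℝ)).integrableOn
  have hnorm : Summable fun m : ℤ => ∫ x in Set.Ioc (0 : ℝ) 1, ‖g (x + m + c)‖ := by
    simpa only [intervalIntegral.integral_of_le zero_le_one]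
      using hgc.norm.hasSum_intervalIntegral_comp_add_int.summable
  calc ∫ x in (0 : ℝ)..1, ∑' m : ℤ, g (x + c + m)
      = ∑' m : ℤ, ∫ x in (0 : ℝ)..1, g (x + m + c) := by
        simp_rw [add_right_comm _ c, intervalIntegral.integral_of_le zero_le_one]
        exact (integral_tsum_of_summable_integral_norm hint hnorm).symm
    _ = ∫ t, g (t + c) := hgc.hasSum_intervalIntegral_comp_add_int.tsum_eq
    _ = ∫ t, g t := integral_add_right_eq_self g c

/-- The paper's `i_{n,k} f`. -/
noncomputable def heisenbergModel (n k : ℤ) (f : ℝ → ℂ) (x y z : ℝ) : ℂ :=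
  ∑' ℓ : {ℓ : ℤ // ℓ ≡ k [ZMOD n]}, e (n * z + (ℓ : ℤ) * y) * f (x + (ℓ : ℤ) / n)

lemma heisenbergModel_eq (n k : ℤ) (f : ℝ → ℂ) (x y z : ℝ) :
    heisenbergModel n k f x y z =
      e (n * z) *
        ∑' ℓ : ℤ, e (ℓ * y) * {ℓ | ℓ ≡ k [ZMOD n]}.indicator (fun ℓ => f (x + ℓ / n)) ℓ := by
  rw [← tsum_mul_left]
  refine (tsum_subtype {ℓ | ℓ ≡ k [ZMOD n]}
    fun ℓ : ℤ => e (n * z + ℓ * y) * f (x + ℓ / n)).trans ?_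
  refine tsum_congr fun ℓ => ?_
  rw [Set.indicator_mul_right, e_add, mul_assoc]

lemma intervalIntegral_heisenbergModel_mul_conj {n : ℤ} (hn : n ≠ 0) (k₁ k₂ : ℤ)
    (f₁ f₂ : 𝓢(ℝ, ℂ)) (x : ℝ) :
    ∫ y in (0 : ℝ)..1, ∫ z in (0 : ℝ)..1,
        heisenbergModel n k₁ f₁ x y z * conj (heisenbergModel n k₂ f₂ x y z) =
      ∑' ℓ : ℤ, {ℓ | ℓ ≡ k₁ [ZMOD n]}.indicator (fun ℓ => f₁ (x + ℓ / n)) ℓ *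
        conj ({ℓ | ℓ ≡ k₂ [ZMOD n]}.indicator (fun ℓ => f₂ (x + ℓ / n)) ℓ) := by
  have hsummable : ∀ (k : ℤ) (f : 𝓢(ℝ, ℂ)),
      Summable fun ℓ => ‖{ℓ | ℓ ≡ k [ZMOD n]}.indicator (fun ℓ => f (x + ℓ / n)) ℓ‖ := by
    intro k f
    simp_rw [norm_indicator_eq_indicator_norm]
    exact summable_subtype_iff_indicator.mp (f.summable_norm_modEq hn k x)
  simp_rw [heisenbergModel_eq, map_mul, mul_mul_mul_comm, e_mul_conj_e, one_mul,
    intervalIntegral.integral_const, sub_zero, one_smul]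
  exact intervalIntegral_tsum_e_mul_mul_conj (hsummable k₁ f₁) (hsummable k₂ f₂)

lemma integral_heisenbergModel_mul_conj_of_modEq {n : ℤ} (hn : n ≠ 0) {k₁ k₂ : ℤ}
    (hk : k₁ ≡ k₂ [ZMOD n]) (f₁ f₂ : 𝓢(ℝ, ℂ)) :
    ∫ x in (0 : ℝ)..1, ∫ y in (0 : ℝ)..1, ∫ z in (0 : ℝ)..1,
        heisenbergModel n k₁ f₁ x y z * conj (heisenbergModel n k₂ f₂ x y z) =
      ∫ t, f₁ t * conj (f₂ t) := by
  have hintegrable : Integrable fun t => f₁ t * conj (f₂ t) :=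
    f₁.integrable.mul_bdd (f₂.continuous.star).aestronglyMeasurable
      (ae_of_all _ fun t => by simpa using SchwartzMap.norm_le_seminorm ℝ f₂ t)
  have hclass : {ℓ | ℓ ≡ k₂ [ZMOD n]} = {ℓ | ℓ ≡ k₁ [ZMOD n]} :=
    Set.ext fun ℓ => ⟨fun h => h.trans hk.symm, fun h => h.trans hk⟩
  calc _ = ∫ x in (0 : ℝ)..1, ∑' m : ℤ, f₁ (x + k₁ / n + m) * conj (f₂ (x + k₁ / n + m)) :=
        intervalIntegral.integral_congr fun x _ => by
          rw [intervalIntegral_heisenbergModel_mul_conj hn, hclass,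
            ← tsum_modEq_comp_add_div hn k₁ (fun t => f₁ t * conj (f₂ t)) x]
          refine (tsum_congr fun ℓ => ?_).trans (tsum_subtype {ℓ | ℓ ≡ k₁ [ZMOD n]}
            fun ℓ : ℤ => f₁ (x + ℓ / n) * conj (f₂ (x + ℓ / n))).symm
          by_cases hℓ : ℓ ≡ k₁ [ZMOD n] <;> simp [hℓ]
    _ = _ := intervalIntegral_tsum_comp_add_int hintegrable _

lemma integral_heisenbergModel_mul_conj_of_not_modEq {n : ℤ} (hn : n ≠ 0) {k₁ k₂ : ℤ}
    (hk : ¬ k₁ ≡ k₂ [ZMOD n]) (f₁ f₂ : 𝓢(ℝ, ℂ)) :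
    ∫ x in (0 : ℝ)..1, ∫ y in (0 : ℝ)..1, ∫ z in (0 : ℝ)..1,
        heisenbergModel n k₁ f₁ x y z * conj (heisenbergModel n k₂ f₂ x y z) = 0 := by
  have hdisjoint : ∀ ℓ : ℤ, ℓ ≡ k₁ [ZMOD n] → ¬ ℓ ≡ k₂ [ZMOD n] :=
    fun ℓ h₁ h₂ => hk (h₁.symm.trans h₂)
  calc _ = ∫ x in (0 : ℝ)..1, (0 : ℂ) :=
        intervalIntegral.integral_congr fun x _ => by
          rw [intervalIntegral_heisenbergModel_mul_conj hn]
          refine (tsum_congr fun ℓ => ?_).trans tsum_zero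
          by_cases hℓ : ℓ ≡ k₁ [ZMOD n] <;> simp [hℓ, hdisjoint]
    _ = 0 := intervalIntegral.integral_zero

theorem heisenberg_model_orthogonality (n : ℤ) (hn : n ≠ 0) (k₁ k₂ : ℤ)
    (f₁ f₂ : SchwartzMap ℝ ℂ) :
    (∀ x y z : ℝ,
      Summable (fun ℓ : {ℓ : ℤ // ℓ ≡ k₁ [ZMOD n]} =>
        ‖e ((n : ℝ) * z + ((ℓ : ℤ) : ℝ) * y) * f₁ (x + ((ℓ : ℤ) : ℝ) / (n : ℝ))‖) ∧
      Summable (fun ℓ : {ℓ : ℤ // ℓ ≡ k₂ [ZMOD n]} =>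
        ‖e ((n : ℝ) * z + ((ℓ : ℤ) : ℝ) * y) * f₂ (x + ((ℓ : ℤ) : ℝ) / (n : ℝ))‖)) ∧
    (k₁ ≡ k₂ [ZMOD n] →
      (∫ x in (0:ℝ)..1, ∫ y in (0:ℝ)..1, ∫ z in (0:ℝ)..1,
        (∑' ℓ : {ℓ : ℤ // ℓ ≡ k₁ [ZMOD n]},
            e ((n : ℝ) * z + ((ℓ : ℤ) : ℝ) * y) * f₁ (x + ((ℓ : ℤ) : ℝ) / (n : ℝ))) *
        (starRingEnd ℂ) (∑' ℓ : {ℓ : ℤ // ℓ ≡ k₂ [ZMOD n]},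
            e ((n : ℝ) * z + ((ℓ : ℤ) : ℝ) * y) * f₂ (x + ((ℓ : ℤ) : ℝ) / (n : ℝ))))
        = ∫ t : ℝ, f₁ t * (starRingEnd ℂ) (f₂ t)) ∧
    (¬ k₁ ≡ k₂ [ZMOD n] →
      (∫ x in (0:ℝ)..1, ∫ y in (0:ℝ)..1, ∫ z in (0:ℝ)..1,
        (∑' ℓ : {ℓ : ℤ // ℓ ≡ k₁ [ZMOD n]},
            e ((n : ℝ) * z + ((ℓ : ℤ) : ℝ) * y) * f₁ (x + ((ℓ : ℤ) : ℝ) / (n : ℝ))) *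
        (starRingEnd ℂ) (∑' ℓ : {ℓ : ℤ // ℓ ≡ k₂ [ZMOD n]},
            e ((n : ℝ) * z + ((ℓ : ℤ) : ℝ) * y) * f₂ (x + ((ℓ : ℤ) : ℝ) / (n : ℝ))))
        = 0) := by
  refine ⟨fun x y z => ⟨?_, ?_⟩, fun hk =>
    integral_heisenbergModel_mul_conj_of_modEq hn hk f₁ f₂,
    fun hk => integral_heisenbergModel_mul_conj_of_not_modEq hn hk f₁ f₂⟩
  · simpa only [norm_mul, norm_e, one_mul] using f₁.summable_norm_modEq hn k₁ x
  · simpa only [norm_mul, norm_e, one_mul] using f₂.summable_norm_modEq hn k₂ x
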